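/- For all nonnegative integers n, m, real x, and t > 0, the product of scaled Hermite polynomials linearizes as H_n(x,t)·H_m(x,t) = n!·m!·Σ_{k=0}^{min(n,m)} (t^k/k!)·(1/((n-k)!(m-k)!))·H_{n+m-2k}(x,t). -/
import Mathlib

open Finset

noncomputable def hermiteScaled (n : ℕ) (x t : ℝ) : ℝ :=
  ∑ j ∈ Finset.range (n / 2 + 1),
    (n.factorial : ℝ) / (j.factorial * (n - 2 * j).factorial) * (-t / 2) ^ j * x ^ (n - 2 * j)

namespace HS

/-- extended coefficient -/
noncomputable def c (n j : ℕ) : ℝ :=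
  if 2 * j ≤ n then (n.factorial : ℝ) / (j.factorial * (n - 2 * j).factorial) else 0

lemma hermiteScaled_eq_sum (n : ℕ) (x t : ℝ) :
    hermiteScaled n x t = ∑ j ∈ range (n + 1), c n j * (-t / 2) ^ j * x ^ (n - 2 * j) := by
  rw [hermiteScaled]
  calc ∑ j ∈ range (n / 2 + 1),
      (n.factorial : ℝ) / (j.factorial * (n - 2 * j).factorial) * (-t / 2) ^ j * x ^ (n - 2 * j)
      = ∑ j ∈ range (n / 2 + 1), c n j * (-t / 2) ^ j * x ^ (n - 2 * j) := by
        refine Finset.sum_congr rfl fun j hj => ?_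
        simp only [mem_range] at hj
        simp only [c, if_pos (show 2 * j ≤ n by omega)]
    _ = ∑ j ∈ range (n + 1), c n j * (-t / 2) ^ j * x ^ (n - 2 * j) := by
        refine Finset.sum_subset (Finset.range_subset_range.mpr (by omega)) fun j _ hj => ?_
        simp only [mem_range, not_lt] at hj
        simp only [c, if_neg (show ¬ 2 * j ≤ n by omega)]
        ring

lemma H_zero (x t : ℝ) : hermiteScaled 0 x t = 1 := by
  simp [hermiteScaled]

lemma H_one (x t : ℝ) : hermiteScaled 1 x t = x := by
  simp [hermiteScaled]


lemma fact_cast_succ (a : ℕ) : ((a+1).factorial : ℝ) = (a+1) * a.factorial := by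
  rw [Nat.factorial_succ]; push_cast; ring

lemma H_rec (n : ℕ) (x t : ℝ) :
    hermiteScaled (n+2) x t
      = x * hermiteScaled (n+1) x t - t * (n+1) * hermiteScaled n x t := by
  rw [hermiteScaled_eq_sum, hermiteScaled_eq_sum, hermiteScaled_eq_sum,
    Finset.mul_sum, Finset.mul_sum]
  -- pad the middle sum to range (n+3)
  have hg : ∑ j ∈ range (n+1+1), x * (c (n+1) j * (-t/2)^j * x ^ (n+1-2*j))
      = ∑ j ∈ range (n+2+1), x * (c (n+1) j * (-t/2)^j * x ^ (n+1-2*j)) := by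
    refine Finset.sum_subset (Finset.range_subset_range.mpr (by omega)) fun j _ hj => ?_
    simp only [mem_range, not_lt] at hj
    simp only [c, if_neg (show ¬ 2 * j ≤ n+1 by omega)]
    ring
  -- pad the last sum to range (n+2)
  have hh : ∑ j ∈ range (n+1), t * (↑n+1) * (c n j * (-t/2)^j * x ^ (n-2*j))
      = ∑ j ∈ range (n+2), t * (↑n+1) * (c n j * (-t/2)^j * x ^ (n-2*j)) := by
    refine Finset.sum_subset (Finset.range_subset_range.mpr (by omega)) fun j _ hj => ?_
    simp only [mem_range, not_lt] at hj
    simp only [c, if_neg (show ¬ 2 * j ≤ n by omega)]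
    ring
  push_cast
  rw [hg, hh]
  rw [Finset.sum_range_succ' (fun j => c (n+2) j * (-t/2)^j * x ^ (n+2-2*j)) (n+2),
      Finset.sum_range_succ' (fun j => x * (c (n+1) j * (-t/2)^j * x ^ (n+1-2*j))) (n+2)]
  have hterm : ∑ j ∈ range (n+2), c (n+2) (j+1) * (-t/2)^(j+1) * x ^ (n+2-2*(j+1))
      = ∑ j ∈ range (n+2), (x * (c (n+1) (j+1) * (-t/2)^(j+1) * x ^ (n+1-2*(j+1)))
          - t * (↑n+1) * (c n j * (-t/2)^j * x ^ (n-2*j))) := by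
    refine Finset.sum_congr rfl fun j hj => ?_
    simp only [mem_range] at hj
    -- termwise identity
    by_cases h1 : 2*j + 1 ≤ n
    · -- main case
      obtain ⟨d, hd⟩ : ∃ d, n = 2*j + 1 + d := ⟨n - (2*j+1), by omega⟩
      subst hd
      simp only [c, if_pos (show 2*(j+1) ≤ 2*j+1+d+2 by omega),
        if_pos (show 2*(j+1) ≤ 2*j+1+d+1 by omega),
        if_pos (show 2*j ≤ 2*j+1+d by omega)]
      rw [show 2*j+1+d+2 - 2*(j+1) = d+1 by omega,
        show 2*j+1+d+1 - 2*(j+1) = d by omega,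
        show 2*j+1+d - 2*j = d+1 by omega]
      have F3 : ((2*j+1+d+2).factorial : ℝ)
          = ((2*j+1+d : ℕ) + 2) * (((2*j+1+d : ℕ)) + 1) * (2*j+1+d).factorial := by
        rw [show 2*j+1+d+2 = ((2*j+1+d)+1)+1 by ring, Nat.factorial_succ, Nat.factorial_succ]
        push_cast; ring
      have F2 : ((2*j+1+d+1).factorial : ℝ) = (((2*j+1+d : ℕ)) + 1) * (2*j+1+d).factorial := by
        rw [Nat.factorial_succ]; push_cast; ring
      rw [F3, F2, fact_cast_succ j, fact_cast_succ d, pow_succ (-t/2) j, pow_succ x d]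
      have hj' : (j.factorial : ℝ) ≠ 0 := by positivity
      have hd' : (d.factorial : ℝ) ≠ 0 := by positivity
      have hn' : ((2*j+1+d).factorial : ℝ) ≠ 0 := by positivity
      push_cast
      field_simp
      ring
    · by_cases h2 : 2*j = n
      · -- boundary case
        subst h2
        simp only [c, if_pos (show 2*(j+1) ≤ 2*j+2 by omega),
          if_neg (show ¬ 2*(j+1) ≤ 2*j+1 by omega),
          if_pos (show 2*j ≤ 2*j by omega)]
        rw [show 2*j - 2*j = 0 by omega, show 2*j+2 - 2*(j+1) = 0 by omega]
        have F3 : ((2*j+2).factorial : ℝ)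
            = ((2*j : ℕ) + 2) * (((2*j : ℕ)) + 1) * (2*j).factorial := by
          rw [show 2*j+2 = ((2*j)+1)+1 by ring, Nat.factorial_succ, Nat.factorial_succ]
          push_cast; ring
        rw [F3, fact_cast_succ j, pow_succ (-t/2) j]
        have hj' : (j.factorial : ℝ) ≠ 0 := by positivity
        have hn' : (((2*j)).factorial : ℝ) ≠ 0 := by positivity
        simp only [Nat.factorial_zero, Nat.cast_one, pow_zero]
        push_cast
        field_simp
        ring
      · -- all zero
        simp only [c, if_neg (show ¬ 2*(j+1) ≤ n+2 by omega),
          if_neg (show ¬ 2*(j+1) ≤ n+1 by omega),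
          if_neg (show ¬ 2*j ≤ n by omega)]
        ring
  rw [Finset.sum_sub_distrib] at hterm
  have h0 : c (n+2) 0 * (-t/2)^0 * x ^ (n+2-2*0)
      = x * (c (n+1) 0 * (-t/2)^0 * x ^ (n+1-2*0)) := by
    simp only [c, if_pos (show 2*0 ≤ n+2 by omega), if_pos (show 2*0 ≤ n+1 by omega)]
    simp only [Nat.factorial_zero, Nat.cast_one, pow_zero, Nat.mul_zero, Nat.sub_zero]
    rw [show n+2 = (n+1)+1 by ring]
    rw [fact_cast_succ (n+1), pow_succ x (n+1)]
    have : ((n+1).factorial : ℝ) ≠ 0 := by positivity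
    push_cast
    field_simp
  linarith [hterm, h0]

lemma xmul (s : ℕ) (x t : ℝ) :
    x * hermiteScaled s x t
      = hermiteScaled (s+1) x t + t * s * hermiteScaled (s-1) x t := by
  cases s with
  | zero => simp [H_zero, H_one]
  | succ r =>
      have := H_rec r x t
      push_cast
      push_cast at this
      linarith

lemma xmul' (a k : ℕ) (hk : 2*k ≤ a + 1) (x t : ℝ) :
    x * hermiteScaled (a+1-2*k) x t
      = hermiteScaled (a+2-2*k) x t
        + t * ((a+1-2*k : ℕ) : ℝ) * hermiteScaled (a-2*k) x t := by
  have h1 : a + 1 - 2*k + 1 = a + 2 - 2*k := by omega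
  have h2 : a + 1 - 2*k - 1 = a - 2*k := by omega
  rw [← h1, ← h2]
  exact xmul _ x t

/-- coefficient in the linearization -/
noncomputable def D (t : ℝ) (n m k : ℕ) : ℝ :=
  if k ≤ n ∧ k ≤ m then
    t^k / (k.factorial : ℝ) * (1 / (((n-k).factorial : ℝ) * ((m-k).factorial : ℝ)))
  else 0

lemma key (t : ℝ) (n m k : ℕ) :
    ((n+2).factorial : ℝ) * D t (n+2) m (k+1)
      - ((n+1).factorial : ℝ) * D t (n+1) m (k+1)
    = ((n+1).factorial : ℝ) * (t * ((n+m+1-2*k : ℕ) : ℝ)) * D t (n+1) m k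
      - t * ((n:ℝ)+1) * (n.factorial : ℝ) * D t n m k := by
  by_cases hA3 : k ≤ n+1 ∧ k ≤ m
  · rcases Nat.lt_or_ge k m with hm | hm
    · rcases Nat.lt_or_ge k (n+1) with hn | hn
      · -- case (i): k ≤ n, k < m
        obtain ⟨a, ha⟩ : ∃ a, n = k + a := ⟨n - k, by omega⟩
        obtain ⟨b, hb⟩ : ∃ b, m = k + 1 + b := ⟨m - (k+1), by omega⟩
        subst ha; subst hb
        simp only [D, if_pos (show k+1 ≤ k+a+2 ∧ k+1 ≤ k+1+b by omega),
          if_pos (show k+1 ≤ k+a+1 ∧ k+1 ≤ k+1+b by omega),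
          if_pos (show k ≤ k+a+1 ∧ k ≤ k+1+b by omega),
          if_pos (show k ≤ k+a ∧ k ≤ k+1+b by omega)]
        rw [show k+a+2 - (k+1) = a+1 by omega, show k+a+1 - (k+1) = a by omega,
          show k+1+b - (k+1) = b by omega, show k+a+1 - k = a+1 by omega,
          show k+1+b - k = b+1 by omega, show k+a - k = a by omega,
          show k+a+(k+1+b)+1 - 2*k = a+b+2 by omega]
        have F1 : ((k+a+2).factorial : ℝ) = ((k+a:ℕ)+2) * (((k+a:ℕ))+1) * (k+a).factorial := by
          rw [show k+a+2 = ((k+a)+1)+1 by ring, Nat.factorial_succ, Nat.factorial_succ]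
          push_cast; ring
        have F2 : ((k+a+1).factorial : ℝ) = (((k+a:ℕ))+1) * (k+a).factorial := by
          rw [Nat.factorial_succ]; push_cast; ring
        rw [F1, F2, fact_cast_succ k, fact_cast_succ a, fact_cast_succ b, pow_succ t k]
        have h1 : (k.factorial : ℝ) ≠ 0 := by positivity
        have h2 : (a.factorial : ℝ) ≠ 0 := by positivity
        have h3 : (b.factorial : ℝ) ≠ 0 := by positivity
        have h4 : ((k+a).factorial : ℝ) ≠ 0 := by positivity
        push_cast
        field_simp
        ring
      · -- case (ii): k = n+1, k < m
        obtain rfl : k = n+1 := by omega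
        obtain ⟨b, hb⟩ : ∃ b, m = n + 2 + b := ⟨m - (n+2), by omega⟩
        subst hb
        simp only [D, if_pos (show n+1+1 ≤ n+2 ∧ n+1+1 ≤ n+2+b by omega),
          if_neg (show ¬(n+1+1 ≤ n+1 ∧ n+1+1 ≤ n+2+b) by omega),
          if_pos (show n+1 ≤ n+1 ∧ n+1 ≤ n+2+b by omega),
          if_neg (show ¬(n+1 ≤ n ∧ n+1 ≤ n+2+b) by omega)]
        rw [show n+2 - (n+1+1) = 0 by omega, show n+2+b - (n+1+1) = b by omega,
          show n+1 - (n+1) = 0 by omega, show n+2+b - (n+1) = b+1 by omega,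
          show n+(n+2+b)+1 - 2*(n+1) = b+1 by omega]
        rw [fact_cast_succ b, pow_succ t (n+1)]
        have h1 : (((n+1)).factorial : ℝ) ≠ 0 := by positivity
        have h2 : (((n+2)).factorial : ℝ) ≠ 0 := by positivity
        have h3 : (b.factorial : ℝ) ≠ 0 := by positivity
        push_cast
        simp only [Nat.factorial_zero, Nat.cast_one]
        field_simp
        ring
    · -- k = m
      obtain rfl : k = m := by omega
      rcases Nat.lt_or_ge k (n+1) with hn | hn
      · -- case (iii): k = m ≤ n
        obtain ⟨a, ha⟩ : ∃ a, n = k + a := ⟨n - k, by omega⟩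
        subst ha
        simp only [D, if_neg (show ¬(k+1 ≤ k+a+2 ∧ k+1 ≤ k) by omega),
          if_neg (show ¬(k+1 ≤ k+a+1 ∧ k+1 ≤ k) by omega),
          if_pos (show k ≤ k+a+1 ∧ k ≤ k by omega),
          if_pos (show k ≤ k+a ∧ k ≤ k by omega)]
        rw [show k+a+1 - k = a+1 by omega, show k - k = 0 by omega,
          show k+a - k = a by omega, show k+a+k+1 - 2*k = a+1 by omega]
        have F2 : ((k+a+1).factorial : ℝ) = (((k+a:ℕ))+1) * (k+a).factorial := by
          rw [Nat.factorial_succ]; push_cast; ring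
        rw [F2, fact_cast_succ a]
        have h1 : (k.factorial : ℝ) ≠ 0 := by positivity
        have h2 : (a.factorial : ℝ) ≠ 0 := by positivity
        have h4 : ((k+a).factorial : ℝ) ≠ 0 := by positivity
        push_cast
        simp only [Nat.factorial_zero, Nat.cast_one]
        field_simp
        ring
      · -- case (iv): k = m = n+1
        obtain rfl : k = n+1 := by omega
        simp only [D, if_neg (show ¬(n+1+1 ≤ n+2 ∧ n+1+1 ≤ n+1) by omega),
          if_neg (show ¬(n+1+1 ≤ n+1 ∧ n+1+1 ≤ n+1) by omega),
          if_pos (show n+1 ≤ n+1 ∧ n+1 ≤ n+1 by omega),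
          if_neg (show ¬(n+1 ≤ n ∧ n+1 ≤ n+1) by omega)]
        rw [show n+(n+1)+1 - 2*(n+1) = 0 by omega]
        push_cast
        ring
  · -- all vanish
    simp only [D, if_neg (show ¬(k+1 ≤ n+2 ∧ k+1 ≤ m) by omega),
      if_neg (show ¬(k+1 ≤ n+1 ∧ k+1 ≤ m) by omega),
      if_neg hA3,
      if_neg (show ¬(k ≤ n ∧ k ≤ m) by omega)]
    ring

lemma G (x t : ℝ) : ∀ n m : ℕ, hermiteScaled n x t * hermiteScaled m x t
    = (n.factorial : ℝ) * (m.factorial : ℝ) *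
        ∑ k ∈ range (n+m+1), D t n m k * hermiteScaled (n+m-2*k) x t := by
  intro n
  induction n using Nat.twoStepInduction with
  | zero =>
    intro m
    rw [H_zero]
    rw [Finset.sum_eq_single 0 (fun k _ hk0 => by
        simp only [D, if_neg (show ¬(k ≤ 0 ∧ k ≤ m) by omega)]; ring)
      (fun h => absurd (mem_range.mpr (by omega)) h)]
    simp only [D, if_pos (show 0 ≤ 0 ∧ 0 ≤ m by omega)]
    have hm : (m.factorial : ℝ) ≠ 0 := by positivity
    simp only [Nat.factorial_zero, Nat.cast_one, pow_zero, Nat.sub_zero, Nat.mul_zero,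
      Nat.zero_add]
    field_simp
  | one =>
    intro m
    rw [H_one]
    rw [show 1+m+1 = (m+1)+1 by ring,
      Finset.sum_range_succ' (fun k => D t 1 m k * hermiteScaled (1+m-2*k) x t) (m+1),
      Finset.sum_range_succ' (fun k => D t 1 m (k+1) * hermiteScaled (1+m-2*(k+1)) x t) m]
    have hz : ∑ k ∈ range m, D t 1 m (k+1+1) * hermiteScaled (1+m-2*(k+1+1)) x t = 0 := by
      refine Finset.sum_eq_zero fun k _ => ?_
      simp only [D, if_neg (show ¬(k+1+1 ≤ 1 ∧ k+1+1 ≤ m) by omega)]; ring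
    rw [hz, zero_add]
    rcases m with _ | r
    · simp only [D, if_neg (show ¬(0+1 ≤ 1 ∧ 0+1 ≤ 0) by omega),
        if_pos (show 0 ≤ 1 ∧ 0 ≤ 0 by omega)]
      rw [H_zero]
      norm_num [Nat.factorial, H_one]
    · simp only [D, if_pos (show 0+1 ≤ 1 ∧ 0+1 ≤ r+1 by omega),
        if_pos (show 0 ≤ 1 ∧ 0 ≤ r+1 by omega)]
      rw [show 1+(r+1)-2*(0+1) = r by omega, show 1+(r+1)-2*0 = r+2 by omega,
        show 1 - (0+1) = 0 by omega, show r+1 - (0+1) = r by omega,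
        show 1 - 0 = 1 by omega, show r+1-0 = r+1 by omega]
      have e := xmul (r+1) x t
      rw [show r+1-1 = r by omega] at e
      rw [show r+1+1 = r+2 by ring] at e
      rw [e]
      have h1 : ((r+1).factorial : ℝ) = (r+1) * r.factorial := by
        rw [Nat.factorial_succ]; push_cast; ring
      have hr : (r.factorial : ℝ) ≠ 0 := by positivity
      simp only [Nat.factorial_one, Nat.factorial_zero, Nat.cast_one, pow_zero, pow_one, h1]
      push_cast
      field_simp
      ring
  | more n ih ih1 =>
    intro m
    rw [H_rec n x t,
      show (x * hermiteScaled (n+1) x t - t * ((n:ℝ)+1) * hermiteScaled n x t)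
          * hermiteScaled m x t
        = x * (hermiteScaled (n+1) x t * hermiteScaled m x t)
          - t * ((n:ℝ)+1) * (hermiteScaled n x t * hermiteScaled m x t) by ring,
      ih1 m, ih m]
    simp only [show n+2+m = n+m+2 from by ring, show n+1+m = n+m+1 from by ring]
    -- push x into the first sum
    have e1 : x * ∑ k ∈ range (n+m+2), D t (n+1) m k * hermiteScaled (n+m+1-2*k) x t
        = (∑ k ∈ range (n+m+2), D t (n+1) m k * hermiteScaled (n+m+2-2*k) x t)
          + ∑ k ∈ range (n+m+2),
              D t (n+1) m k * (t * ((n+m+1-2*k : ℕ) : ℝ))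
                * hermiteScaled (n+m-2*k) x t := by
      rw [Finset.mul_sum, ← Finset.sum_add_distrib]
      refine Finset.sum_congr rfl fun k _ => ?_
      by_cases hD : k ≤ n+1 ∧ k ≤ m
      · have h2k : 2*k ≤ n+m+1 := by omega
        rw [show x * (D t (n+1) m k * hermiteScaled (n+m+1-2*k) x t)
            = D t (n+1) m k * (x * hermiteScaled (n+m+1-2*k) x t) by ring,
          xmul' (n+m) k h2k x t]
        ring
      · simp only [D, if_neg hD]; ring
    -- pad sums
    have e2 : ∑ k ∈ range (n+m+2), D t (n+1) m k * hermiteScaled (n+m+2-2*k) x t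
        = ∑ k ∈ range (n+m+3), D t (n+1) m k * hermiteScaled (n+m+2-2*k) x t := by
      refine Finset.sum_subset (Finset.range_subset_range.mpr (by omega)) fun k _ hk => ?_
      simp only [mem_range, not_lt] at hk
      simp only [D, if_neg (show ¬(k ≤ n+1 ∧ k ≤ m) by omega)]; ring
    have e3 : ∑ k ∈ range (n+m+1), D t n m k * hermiteScaled (n+m-2*k) x t
        = ∑ k ∈ range (n+m+2), D t n m k * hermiteScaled (n+m-2*k) x t := by
      refine Finset.sum_subset (Finset.range_subset_range.mpr (by omega)) fun k _ hk => ?_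
      simp only [mem_range, not_lt] at hk
      simp only [D, if_neg (show ¬(k ≤ n ∧ k ≤ m) by omega)]; ring
    -- the central rearrangement
    have e4 : ((n+2).factorial : ℝ)
          * ∑ k ∈ range (n+m+3), D t (n+2) m k * hermiteScaled (n+m+2-2*k) x t
        - ((n+1).factorial : ℝ)
          * ∑ k ∈ range (n+m+3), D t (n+1) m k * hermiteScaled (n+m+2-2*k) x t
      = ((n+1).factorial : ℝ)
          * ∑ k ∈ range (n+m+2),
              D t (n+1) m k * (t * ((n+m+1-2*k : ℕ) : ℝ)) * hermiteScaled (n+m-2*k) x t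
        - t * ((n:ℝ)+1) * (n.factorial : ℝ)
          * ∑ k ∈ range (n+m+2), D t n m k * hermiteScaled (n+m-2*k) x t := by
      rw [Finset.mul_sum, Finset.mul_sum, Finset.mul_sum, Finset.mul_sum,
        ← Finset.sum_sub_distrib, ← Finset.sum_sub_distrib]
      rw [show n+m+3 = (n+m+2)+1 by ring]
      rw [Finset.sum_range_succ' (fun k =>
        ((n+2).factorial : ℝ) * (D t (n+2) m k * hermiteScaled (n+m+2-2*k) x t)
          - ((n+1).factorial : ℝ) * (D t (n+1) m k * hermiteScaled (n+m+2-2*k) x t)) (n+m+2)]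
      have h0 : ((n+2).factorial : ℝ) * (D t (n+2) m 0 * hermiteScaled (n+m+2-2*0) x t)
          - ((n+1).factorial : ℝ) * (D t (n+1) m 0 * hermiteScaled (n+m+2-2*0) x t) = 0 := by
        simp only [D, if_pos (show 0 ≤ n+2 ∧ 0 ≤ m by omega),
          if_pos (show 0 ≤ n+1 ∧ 0 ≤ m by omega)]
        have h2 : (((n+2).factorial : ℝ)) ≠ 0 := by positivity
        have h1 : (((n+1).factorial : ℝ)) ≠ 0 := by positivity
        have hm : ((m.factorial : ℝ)) ≠ 0 := by positivity
        simp only [Nat.factorial_zero, Nat.cast_one, pow_zero, Nat.sub_zero]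
        field_simp
        ring
      rw [h0, add_zero]
      refine Finset.sum_congr rfl fun k _ => ?_
      rw [show n+m+2-2*(k+1) = n+m-2*k by omega]
      linear_combination hermiteScaled (n+m-2*k) x t * key t n m k
    linear_combination (((n+1).factorial : ℝ) * (m.factorial : ℝ)) * e1
      + (((n+1).factorial : ℝ) * (m.factorial : ℝ)) * e2
      - (m.factorial : ℝ) * e4
      - t * ((n:ℝ)+1) * (n.factorial : ℝ) * (m.factorial : ℝ) * e3

end HS

/-- Linearization of products:
`H_n(x,t)·H_m(x,t) = n! m! ∑_{k=0}^{min(n,m)} (t^k/k!) (1/((n-k)!(m-k)!)) H_{n+m-2k}(x,t)`. -/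
theorem hermiteScaled_mul (n m : ℕ) (x t : ℝ) (ht : 0 < t) :
    hermiteScaled n x t * hermiteScaled m x t
      = (n.factorial : ℝ) * (m.factorial : ℝ) *
        ∑ k ∈ Finset.range (min n m + 1),
          t ^ k / (k.factorial : ℝ) *
            (1 / (((n - k).factorial : ℝ) * ((m - k).factorial : ℝ))) *
            hermiteScaled (n + m - 2 * k) x t := by
  have hsum : ∑ k ∈ Finset.range (min n m + 1),
        t ^ k / (k.factorial : ℝ) *
          (1 / (((n - k).factorial : ℝ) * ((m - k).factorial : ℝ))) *
          hermiteScaled (n + m - 2 * k) x t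
      = ∑ k ∈ Finset.range (n + m + 1), HS.D t n m k * hermiteScaled (n + m - 2 * k) x t := by
    calc ∑ k ∈ Finset.range (min n m + 1),
          t ^ k / (k.factorial : ℝ) *
            (1 / (((n - k).factorial : ℝ) * ((m - k).factorial : ℝ))) *
            hermiteScaled (n + m - 2 * k) x t
        = ∑ k ∈ Finset.range (min n m + 1), HS.D t n m k * hermiteScaled (n + m - 2 * k) x t := by
          refine Finset.sum_congr rfl fun k hk => ?_
          simp only [Finset.mem_range] at hk
          simp only [HS.D, if_pos (show k ≤ n ∧ k ≤ m by omega)]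
      _ = ∑ k ∈ Finset.range (n + m + 1), HS.D t n m k * hermiteScaled (n + m - 2 * k) x t := by
          refine Finset.sum_subset (Finset.range_subset_range.mpr (by omega)) fun k _ hk => ?_
          simp only [Finset.mem_range, not_lt] at hk
          simp only [HS.D, if_neg (show ¬(k ≤ n ∧ k ≤ m) by omega)]
          ring
  rw [hsum]
  exact HS.G x t n m
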